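/- arXiv:1907.09185 — 4 statements merged into one kernel-verified Lean document; each statement's English description precedes it below -/
import Mathlib

section
/- Let m ∈ ℕ with m ≥ 2, let τ ∈ [0,1), and let a : ℤ → ℝ be a finitely supported mask with k_ℓ = min{k ∈ ℤ : a_k ≠ 0} and k_r = max{k ∈ ℤ : a_k ≠ 0}. If φ : ℝ → ℝ is a continuous, compactly supported function satisfying the refinement equation φ(x) = Σ_{k∈ℤ} a_k φ(mx − k + τ) for all x ∈ ℝ, then φ(x) = 0 for every x outside the interval [(k_ℓ − τ)/(m − 1), (k_r − τ)/(m − 1)]. -/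
/-- A continuous, compactly supported solution of the refinement
equation `φ(x) = Σ_k a_k φ(mx - k + τ)` vanishes outside
`[(kℓ - τ)/(m - 1), (kr - τ)/(m - 1)]`. -/
theorem refinable_support_subset
    (m : ℕ) (hm : 2 ≤ m) (τ : ℝ) (hτ : τ ∈ Set.Ico (0 : ℝ) 1)
    (a : ℤ → ℝ) (ha : (Function.support a).Finite)
    (kl kr : ℤ)
    (hkl : IsLeast {k : ℤ | a k ≠ 0} kl)
    (hkr : IsGreatest {k : ℤ | a k ≠ 0} kr)
    (φ : ℝ → ℝ) (hφc : Continuous φ) (hφs : HasCompactSupport φ)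
    (href : ∀ x : ℝ, φ x = ∑ᶠ k : ℤ, a k * φ ((m : ℝ) * x - (k : ℝ) + τ)) :
    ∀ x : ℝ, x ∉ Set.Icc (((kl : ℝ) - τ) / ((m : ℝ) - 1)) (((kr : ℝ) - τ) / ((m : ℝ) - 1)) →
      φ x = 0 := by
  intro x hx
  by_contra hφx
  -- the (closed) support is nonempty
  set K := tsupport φ with hK
  have hKc : IsCompact K := hφs
  have hKne : K.Nonempty := ⟨x, subset_closure hφx⟩
  have hbdd : BddAbove K := hKc.bddAbove
  have hbddb : BddBelow K := hKc.bddBelow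
  set R := sSup K with hR
  set L := sInf K with hL
  have hRK : R ∈ K := hKc.sSup_mem hKne
  have hLK : L ∈ K := hKc.sInf_mem hKne
  have hm1 : (1 : ℝ) ≤ (m : ℝ) - 1 := by
    have : (2 : ℝ) ≤ (m : ℝ) := by exact_mod_cast hm
    linarith
  have hm0 : (0 : ℝ) < (m : ℝ) - 1 := by linarith
  have hmpos : (0 : ℝ) < (m : ℝ) := by linarith
  -- key step: for y in support φ, there is k with a k ≠ 0 and φ (m y - k + τ) ≠ 0
  have key : ∀ y : ℝ, φ y ≠ 0 → ∃ k : ℤ, a k ≠ 0 ∧ φ ((m : ℝ) * y - (k : ℝ) + τ) ≠ 0 := by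
    intro y hy
    by_contra h
    push_neg at h
    apply hy
    rw [href y]
    apply finsum_eq_zero_of_forall_eq_zero
    intro k
    by_cases hk : a k = 0
    · simp [hk]
    · simp [h k hk]
  -- bound from above: for y ∈ support φ, m y ≤ R + kr - τ
  have hub : ∀ y ∈ Function.support φ, (m : ℝ) * y ≤ R + (kr : ℝ) - τ := by
    intro y hy
    obtain ⟨k, hk, hk2⟩ := key y hy
    have h1 : (m : ℝ) * y - (k : ℝ) + τ ≤ R := le_csSup hbdd (subset_closure hk2)
    have h2 : (k : ℝ) ≤ (kr : ℝ) := by exact_mod_cast hkr.2 hk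
    linarith
  have hlb : ∀ y ∈ Function.support φ, L + (kl : ℝ) - τ ≤ (m : ℝ) * y := by
    intro y hy
    obtain ⟨k, hk, hk2⟩ := key y hy
    have h1 : L ≤ (m : ℝ) * y - (k : ℝ) + τ := csInf_le hbddb (subset_closure hk2)
    have h2 : (kl : ℝ) ≤ (k : ℝ) := by exact_mod_cast hkl.2 hk
    linarith
  -- extend to the closure K
  have hubK : ∀ y ∈ K, (m : ℝ) * y ≤ R + (kr : ℝ) - τ := by
    intro y hy
    have hcl : K ⊆ {z : ℝ | (m : ℝ) * z ≤ R + (kr : ℝ) - τ} := by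
      apply closure_minimal hub
      exact isClosed_le (continuous_const.mul continuous_id) continuous_const
    exact hcl hy
  have hlbK : ∀ y ∈ K, L + (kl : ℝ) - τ ≤ (m : ℝ) * y := by
    intro y hy
    have hcl : K ⊆ {z : ℝ | L + (kl : ℝ) - τ ≤ (m : ℝ) * z} := by
      apply closure_minimal hlb
      exact isClosed_le continuous_const (continuous_const.mul continuous_id)
    exact hcl hy
  have hRbound : R ≤ ((kr : ℝ) - τ) / ((m : ℝ) - 1) := by
    have := hubK R hRK
    rw [le_div_iff₀ hm0]
    nlinarith
  have hLbound : ((kl : ℝ) - τ) / ((m : ℝ) - 1) ≤ L := by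
    have := hlbK L hLK
    rw [div_le_iff₀ hm0]
    nlinarith
  -- conclude
  have hxK : x ∈ K := subset_closure hφx
  have h1 : x ≤ R := le_csSup hbdd hxK
  have h2 : L ≤ x := csInf_le hbddb hxK
  exact hx ⟨le_trans hLbound h2, le_trans h1 hRbound⟩
end

section
/- Let m ∈ ℕ with m ≥ 2, let τ ∈ [0,1) ∩ ℚ, let a : ℤ → ℝ be a finitely supported mask, and let φ : ℝ → ℝ be a continuous, compactly supported function satisfying the refinement equation φ(x) = Σ_{k∈ℤ} a_k φ(mx − k + τ) for all x ∈ ℝ, such that |φ(x)| + |φ̂(x)| ≤ C(1 + |x|)^{−1−ε} for all x ∈ ℝ, for some C, ε > 0. Then for every T ∈ ℕ, T ≥ 1, with τT ∈ ℕ, and for every ω ∈ ℝ, writing z = e^{−2πiω/T}, the following identity holds: Σ_{γ=0}^{mT−1} Φ_{T,γ}(z^m) = m z^{−τT} Σ_{β=0}^{m−1} Σ_{γ=0,…,mT−1 with γ+βT ≡ τT (mod m)} A_β(z^T) Φ_{T,γ}(z). -/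
/-!
Sample `φ` on the grid `T⁻¹ℤ`, `g n = φ (n / T)`. Since `τ = s / T`, the refinement equation at
`x = j / T` becomes the finite identity `g j = Σ_k a_k g (m j - T k + s)`. Multiplying by
`z^(m j)` and summing over `j` expresses the symbol of `g` at `z^m` through the coset sums
`Σ_{n ≡ s - T k (mod m)} g n z^n`, which depend only on `k mod m`; grouping `k` by its residue
`β` produces the sub-symbols `A_β(z^T)`. Finally each coset sum modulo `m` splits into cosets
modulo `m T`, and those are the `T Φ_{T,γ}(z)`.
-/

/-- The Fourier transform `φ̂(ω) = ∫ φ(x) e^{-2πixω} dx`. -/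
noncomputable def fourierT (φ : ℝ → ℝ) (ω : ℝ) : ℂ :=
  ∫ x : ℝ, (φ x : ℂ) * Complex.exp (-(2 * (Real.pi : ℂ) * Complex.I * (x : ℂ) * (ω : ℂ)))

/-- The Laurent polynomial `Φ_{T,n}(z) = (1/T) Σ_k φ(mk + n/T) z^(mTk+n)`. -/
noncomputable def PhiSub (φ : ℝ → ℝ) (m T : ℕ) (n : ℤ) (z : ℂ) : ℂ :=
  (T : ℂ)⁻¹ * ∑ᶠ k : ℤ, (φ ((m : ℝ) * (k : ℝ) + (n : ℝ) / (T : ℝ)) : ℂ) * z ^ ((m : ℤ) * (T : ℤ) * k + n)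

/-- The sub-symbol `A_n(z) = (1/m) Σ_k a_{mk+n} z^(mk+n)` of the mask `a`. -/
noncomputable def ASub (a : ℤ → ℝ) (m : ℕ) (n : ℤ) (z : ℂ) : ℂ :=
  (m : ℂ)⁻¹ * ∑ᶠ k : ℤ, (a ((m : ℤ) * k + n) : ℂ) * z ^ ((m : ℤ) * k + n)

open Function Finset

section ResidueSums

variable {M : Type*} [AddCommMonoid M]

theorem finsum_comm_of_finite {α β : Type*} (f : α → β → M) (hf : (support (uncurry f)).Finite) :
    ∑ᶠ a, ∑ᶠ b, f a b = ∑ᶠ b, ∑ᶠ a, f a b := by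
  have hf' : (support (uncurry f ∘ Equiv.prodComm β α)).Finite :=
    hf.preimage (Equiv.prodComm β α).injective.injOn
  calc ∑ᶠ a, ∑ᶠ b, f a b = ∑ᶠ p, uncurry f p := (finsum_curry _ hf).symm
    _ = ∑ᶠ q, uncurry f (Equiv.prodComm β α q) := (finsum_comp_equiv _).symm
    _ = ∑ᶠ b, ∑ᶠ a, f a b := finsum_curry _ hf'

theorem finsum_eq_sum_range_finsum_mul_add {f : ℤ → M} (hf : (support f).Finite) {N : ℕ}
    (hN : 0 < N) : ∑ᶠ n, f n = ∑ γ ∈ range N, ∑ᶠ k, f (N * k + γ) := by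
  have : NeZero N := ⟨hN.ne'⟩
  let e : Fin N × ℤ ≃ ℤ := (Equiv.prodComm _ _).trans (Int.divModEquiv N).symm
  have hfe : (support (f ∘ e)).Finite := hf.preimage e.injective.injOn
  rw [← finsum_comp_equiv e, ← comp_def, finsum_curry _ hfe, finsum_eq_sum_of_fintype,
    ← Fin.sum_univ_eq_sum_range]
  refine Finset.sum_congr rfl fun γ _ => finsum_congr fun k => ?_
  simp [e, mul_comm]

theorem finsum_mem_setOf_eq_sum_filter_range {f : ℤ → M} (hf : (support f).Finite) {N : ℕ}
    (hN : 0 < N) (p : ℤ → Prop) [DecidablePred p] (hp : ∀ k n, p (N * k + n) ↔ p n) :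
    ∑ᶠ n ∈ {n | p n}, f n = ∑ γ ∈ (range N).filter (fun γ : ℕ => p γ), ∑ᶠ k, f (N * k + γ) := by
  have hfp : (support ({n | p n}.indicator f)).Finite :=
    (hf.inter_of_right _).subset Set.support_indicator.subset
  rw [finsum_mem_def, finsum_eq_sum_range_finsum_mul_add hfp hN, sum_filter]
  refine Finset.sum_congr rfl fun γ _ => ?_
  split_ifs with hγ
  · exact finsum_congr fun k => Set.indicator_of_mem ((hp k γ).2 hγ) f
  · exact finsum_eq_zero_of_forall_eq_zero fun k =>
      Set.indicator_of_notMem (fun h => hγ ((hp k γ).1 h)) f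

theorem finsum_mul_add_eq_finsum_mem_modEq (f : ℤ → M) {m : ℤ} (hm : m ≠ 0) (c : ℤ) :
    ∑ᶠ j, f (m * j + c) = ∑ᶠ n ∈ {n | n ≡ c [ZMOD m]}, f n := by
  have hrange : Set.range (fun j => m * j + c) = {n | n ≡ c [ZMOD m]} := by
    ext n
    simp only [Set.mem_range, Set.mem_ofPred_eq, Int.modEq_comm, Int.modEq_iff_dvd]
    exact ⟨fun ⟨j, hj⟩ => ⟨j, by omega⟩, fun ⟨j, hj⟩ => ⟨j, by omega⟩⟩
  rw [← hrange, finsum_mem_range]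
  intro j j' h
  exact mul_left_cancel₀ hm (add_right_cancel h)

end ResidueSums

theorem HasCompactSupport.finite_support_intCast_div {M : Type*} [Zero M] {φ : ℝ → M}
    (hφ : HasCompactSupport φ) {T : ℝ} (hT : T ≠ 0) :
    (support fun n : ℤ => φ (n / T)).Finite := by
  have h : HasCompactSupport fun n : ℤ => φ (T⁻¹ • (n : ℝ)) :=
    (hφ.comp_smul (inv_ne_zero hT)).comp_isClosedEmbedding Int.isClosedEmbedding_coe_real
  simp only [smul_eq_mul, inv_mul_eq_div] at h
  exact h.isCompact.finite_of_discrete.subset (subset_tsupport _)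

theorem finsum_mul_add_mul_pow_zpow (g : ℤ → ℂ) {m : ℕ} (hm : 0 < m) (c : ℤ) {z : ℂ}
    (hz : z ≠ 0) :
    ∑ᶠ j, g (m * j + c) * (z ^ m) ^ j = z ^ (-c) * ∑ᶠ n ∈ {n | n ≡ c [ZMOD m]}, g n * z ^ n := by
  rw [← finsum_mul_add_eq_finsum_mem_modEq _ (by exact_mod_cast hm.ne'), mul_finsum]
  refine finsum_congr fun j => ?_
  rw [← zpow_natCast, ← zpow_mul, mul_left_comm, ← zpow_add₀ hz]
  ring_nf

theorem finite_support_uncurry_mul_comp_mul_sub {g b : ℤ → ℂ} (hg : (support g).Finite)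
    (hb : (support b).Finite) {m : ℤ} (hm : m ≠ 0) (T s : ℤ) (w : ℤ → ℂ) :
    (support (uncurry fun j k => b k * g (m * j - T * k + s) * w j)).Finite := by
  refine ((hb.prod hg).preimage (f := fun p : ℤ × ℤ => (p.2, m * p.1 - T * p.2 + s)) ?_).subset ?_
  · rintro ⟨j, k⟩ - ⟨j', k'⟩ - h
    obtain ⟨rfl, h⟩ := Prod.mk.inj h
    simp [mul_left_cancel₀ hm (by linarith : m * j = m * j')]
  · rintro ⟨j, k⟩ h
    simp only [mem_support, uncurry_apply_pair, ne_eq, mul_eq_zero, not_or] at h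
    exact ⟨h.1.1, h.1.2⟩

theorem finsum_mul_pow_zpow_eq_of_refinement {g b : ℤ → ℂ} (hg : (support g).Finite)
    (hb : (support b).Finite) {m : ℕ} (hm : 0 < m) (T : ℕ) (s : ℤ)
    (href : ∀ j, g j = ∑ᶠ k, b k * g (m * j - T * k + s)) {z : ℂ} (hz : z ≠ 0) :
    ∑ᶠ n, g n * (z ^ m) ^ n =
      z ^ (-s) * ∑ β ∈ range m, (∑ᶠ k, b (m * k + β) * (z ^ T) ^ (m * k + β)) *
        ∑ᶠ n ∈ {n | n ≡ s - T * β [ZMOD m]}, g n * z ^ n := by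
  set S : ℤ → ℂ := fun c => ∑ᶠ n ∈ {n | n ≡ c [ZMOD m]}, g n * z ^ n with hS
  have hperiodic : ∀ (β : ℕ) k, S (s - T * (m * k + β)) = S (s - T * β) := by
    intro β k
    have hc : s - T * (m * k + β) ≡ s - T * β [ZMOD m] := Int.modEq_iff_dvd.2 ⟨T * k, by ring⟩
    simp only [hS]
    congr! 3 with n
    exact ⟨fun h => h.trans hc, fun h => h.trans hc.symm⟩
  calc ∑ᶠ n, g n * (z ^ m) ^ n
      = ∑ᶠ j, ∑ᶠ k, b k * g (m * j - T * k + s) * (z ^ m) ^ j :=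
        finsum_congr fun j => by rw [href j, finsum_mul]
    _ = ∑ᶠ k, b k * z ^ (T * k - s) * S (s - T * k) := by
        rw [finsum_comm_of_finite _
          (finite_support_uncurry_mul_comp_mul_sub hg hb (by exact_mod_cast hm.ne') T s _)]
        refine finsum_congr fun k => ?_
        simp_rw [mul_assoc, ← mul_finsum, sub_add_eq_add_sub, add_sub_assoc,
          finsum_mul_add_mul_pow_zpow g hm _ hz, neg_sub]
        rfl
    _ = ∑ β ∈ range m, ∑ᶠ k, b (m * k + β) * z ^ (T * (m * k + β) - s) * S (s - T * β) := by
        rw [finsum_eq_sum_range_finsum_mul_add (hb.subset ?_) hm]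
        · simp_rw [hperiodic]
        · intro k hk
          simp only [mem_support, ne_eq, mul_eq_zero, not_or] at hk ⊢
          exact hk.1.1
    _ = _ := by
        rw [mul_sum]
        refine Finset.sum_congr rfl fun β _ => ?_
        rw [← finsum_mul, ← mul_assoc]
        congr 1
        rw [mul_finsum]
        refine finsum_congr fun k => ?_
        rw [zpow_sub₀ hz, zpow_mul, zpow_natCast, div_eq_mul_inv, zpow_neg]
        ring

section Refinable

variable {φ : ℝ → ℝ} {m T : ℕ}

theorem refinement_at_intCast_div {a : ℤ → ℝ} {τ : ℝ}
    (href : ∀ x : ℝ, φ x = ∑ᶠ k : ℤ, a k * φ ((m : ℝ) * x - (k : ℝ) + τ))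
    (hT : (T : ℝ) ≠ 0) {s : ℕ} (hs : (s : ℝ) = τ * T) (j : ℤ) :
    (φ (j / T) : ℂ) = ∑ᶠ k : ℤ, (a k : ℂ) * φ ((m * j - T * k + s : ℤ) / T) := by
  rw [href]
  refine (Complex.ofRealHom.toAddMonoidHom.map_finsum_of_injective Complex.ofReal_injective _).trans
    (finsum_congr fun k => ?_)
  have harg : (m : ℝ) * (j / T) - k + τ = (m * j - T * k + s : ℤ) / T := by
    push_cast
    rw [hs]
    field_simp
  simp [harg]

theorem PhiSub_eq (hT : (T : ℝ) ≠ 0) (n : ℤ) (w : ℂ) :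
    PhiSub φ m T n w =
      (T : ℂ)⁻¹ * ∑ᶠ k : ℤ, (φ ((m * T * k + n : ℤ) / T) : ℂ) * w ^ (m * T * k + n) := by
  unfold PhiSub
  congr 1
  refine finsum_congr fun k => ?_
  congr 3
  push_cast
  field_simp

theorem sum_filter_PhiSub (hφ : HasCompactSupport φ) (hm : 0 < m) (hT : 0 < T) (p : ℤ → Prop)
    [DecidablePred p] (hp : ∀ k n, p (m * T * k + n) ↔ p n) (w : ℂ) :
    ∑ γ ∈ (range (m * T)).filter (fun γ : ℕ => p γ), PhiSub φ m T γ w =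
      (T : ℂ)⁻¹ * ∑ᶠ n ∈ {n | p n}, (φ (n / T) : ℂ) * w ^ n := by
  have hT0 : (T : ℝ) ≠ 0 := by positivity
  have hfin : (support fun n : ℤ => (φ (n / T) : ℂ) * w ^ n).Finite :=
    ((hφ.comp_left Complex.ofReal_zero).finite_support_intCast_div hT0).subset
      (support_mul_subset_left _ _)
  rw [finsum_mem_setOf_eq_sum_filter_range hfin (Nat.mul_pos hm hT) p (by exact_mod_cast hp),
    mul_sum]
  refine Finset.sum_congr rfl fun γ _ => ?_
  rw [PhiSub_eq hT0]
  push_cast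
  rfl

theorem sum_range_PhiSub (hφ : HasCompactSupport φ) (hm : 0 < m) (hT : 0 < T) (w : ℂ) :
    ∑ γ ∈ range (m * T), PhiSub φ m T γ w = (T : ℂ)⁻¹ * ∑ᶠ n : ℤ, (φ (n / T) : ℂ) * w ^ n := by
  simpa using sum_filter_PhiSub hφ hm hT (fun _ => True) (by simp) w

theorem sum_filter_mod_PhiSub (hφ : HasCompactSupport φ) (hm : 0 < m) (hT : 0 < T) (β s : ℕ)
    (w : ℂ) :
    ∑ γ ∈ (range (m * T)).filter (fun γ => (γ + β * T) % m = s % m), PhiSub φ m T γ w =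
      (T : ℂ)⁻¹ * ∑ᶠ n ∈ {n | n ≡ s - T * β [ZMOD m]}, (φ (n / T) : ℂ) * w ^ n := by
  have hmod : ∀ γ : ℕ, (γ + β * T) % m = s % m ↔ (γ : ℤ) ≡ s - T * β [ZMOD m] := by
    intro γ
    rw [← Nat.ModEq, ← Int.natCast_modEq_iff, Int.modEq_iff_dvd, Int.modEq_iff_dvd]
    push_cast
    ring_nf
  rw [filter_congr fun γ _ => hmod γ]
  exact sum_filter_PhiSub hφ hm hT (fun n => n ≡ s - T * β [ZMOD m])
    (fun k n => by simp [Int.ModEq, mul_assoc]) w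

end Refinable

theorem refinable_necessary_condition_general
    (m : ℕ) (τ : ℝ)
    (a : ℤ → ℝ) (ha : (Function.support a).Finite)
    (φ : ℝ → ℝ) (hφs : HasCompactSupport φ)
    (href : ∀ x : ℝ, φ x = ∑ᶠ k : ℤ, a k * φ ((m : ℝ) * x - (k : ℝ) + τ))
    (T : ℕ) (s : ℕ) (hs : (s : ℝ) = τ * T) :
    ∀ ω : ℝ, ∀ z : ℂ,
      z = Complex.exp (-(2 * (Real.pi : ℂ) * Complex.I * (ω : ℂ) / (T : ℂ))) →
      ∑ γ ∈ Finset.range (m * T), PhiSub φ m T (γ : ℤ) (z ^ m) =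
        (m : ℂ) * z ^ (-(s : ℤ)) *
          ∑ β ∈ Finset.range m,
            ∑ γ ∈ (Finset.range (m * T)).filter (fun γ => (γ + β * T) % m = s % m),
              ASub a m (β : ℤ) (z ^ T) * PhiSub φ m T (γ : ℤ) z := by
  intro ω z hz
  -- for `m = 0` or `T = 0` both sides vanish: empty sums, resp. the factor `(0 : ℂ)⁻¹` of `PhiSub`
  rcases Nat.eq_zero_or_pos m with rfl | hm
  · simp
  rcases Nat.eq_zero_or_pos T with rfl | hT
  · simp [PhiSub]
  have hT0 : (T : ℝ) ≠ 0 := by positivity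
  have hg : (support fun n : ℤ => (φ (n / T) : ℂ)).Finite :=
    (hφs.comp_left Complex.ofReal_zero).finite_support_intCast_div hT0
  have hb : (support fun k => (a k : ℂ)).Finite := ha.subset fun k hk => by simpa using hk
  simp_rw [← mul_sum, sum_filter_mod_PhiSub hφs hm hT, sum_range_PhiSub hφs hm hT,
    finsum_mul_pow_zpow_eq_of_refinement hg hb hm T s (refinement_at_intCast_div href hT0 hs)
      (hz ▸ Complex.exp_ne_zero _)]
  simp only [ASub, mul_sum]
  refine sum_congr rfl fun β _ => ?_
  have hm0 : (m : ℂ) ≠ 0 := Nat.cast_ne_zero.2 hm.ne'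
  field_simp

/-- Theorem 2.1: necessary algebraic condition for refinability,
`Σ_{γ=0}^{mT-1} Φ_{T,γ}(z^m) = m z^{-τT} Σ_β Σ_{γ : γ+βT ≡ τT (mod m)} A_β(z^T) Φ_{T,γ}(z)`
for `z = e^{-2πiω/T}` and `τT ∈ ℕ` (here `s = τT`). -/
theorem refinable_necessary_condition
    (m : ℕ) (hm : 2 ≤ m) (τ : ℝ) (hτ : τ ∈ Set.Ico (0 : ℝ) 1)
    (a : ℤ → ℝ) (ha : (Function.support a).Finite)
    (φ : ℝ → ℝ) (hφc : Continuous φ) (hφs : HasCompactSupport φ)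
    (href : ∀ x : ℝ, φ x = ∑ᶠ k : ℤ, a k * φ ((m : ℝ) * x - (k : ℝ) + τ))
    (hdecay : ∃ C ε : ℝ, 0 < C ∧ 0 < ε ∧
      ∀ x : ℝ, |φ x| + ‖fourierT φ x‖ ≤ C * (1 + |x|) ^ (-1 - ε))
    (T : ℕ) (hT : 1 ≤ T) (s : ℕ) (hs : (s : ℝ) = τ * T) :
    ∀ ω : ℝ, ∀ z : ℂ,
      z = Complex.exp (-(2 * (Real.pi : ℂ) * Complex.I * (ω : ℂ) / (T : ℂ))) →
      ∑ γ ∈ Finset.range (m * T), PhiSub φ m T (γ : ℤ) (z ^ m) =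
        (m : ℂ) * z ^ (-(s : ℤ)) *
          ∑ β ∈ Finset.range m,
            ∑ γ ∈ (Finset.range (m * T)).filter (fun γ => (γ + β * T) % m = s % m),
              ASub a m (β : ℤ) (z ^ T) * PhiSub φ m T (γ : ℤ) z :=
  refinable_necessary_condition_general m τ a ha φ hφs href T s hs
end

section
/- Let λ ∈ ℕ, λ ≥ 1, and m = 2λ + 1. Let a : ℤ → ℝ be a finitely supported mask and let φ : ℝ → ℝ be a continuous, compactly supported function satisfying φ(x) = Σ_{k∈ℤ} a_k φ(mx − k + 1/2) for all x ∈ ℝ, with |φ(x)| + |φ̂(x)| ≤ C(1 + |x|)^{−1−ε} for some C, ε > 0. Then φ(n) = δ_{0,n} for all n ∈ ℤ if and only if for every ω ∈ ℝ, writing z = e^{−πiω}, the identity 1/2 + Σ_{γ=0}^{m−1} Φ_{2,2γ+1}(z^m) = m z^{−1} ( A_{(m+1)/2}(z²)/2 + Σ_{γ=0}^{m−1} A_{m−γ}(z²) Φ_{2,2γ+1}(z) ) holds. -/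
/-!
On `z ≠ 0` both sides of the identity are Laurent polynomials in `z`. The left side is
`½ (1 + Σ_j φ(j + ½) z^(2mj+m))`. On the right, `m z⁻¹ A_{λ+1}(z²) = Σ_k a_{mk+λ+1} z^(2mk+m)`,
and the products `A_{m-γ}(z²) Φ_{2,2γ+1}(z)`, regrouped by `s = mℓ + γ`, add up to the refinement
equation at the integers, `φ(j) = Σ_s a_{mj-s} φ(s + ½)`, giving `½ Σ_j φ(j) z^(2mj)`. The
exponents `2mj` and `2mj + m` never coincide, so the identity on the (infinite) unit circle
says exactly that `φ(j) = δ_{j,0}` and `φ(j + ½) = a_{mj+λ+1}`. For interpolatory `φ` the second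
family is the refinement equation at `j + ½`, where only the term `k = mj + λ + 1` survives.
-/

open Function Finset

theorem HasCompactSupport.hasFiniteSupport_intCast_add {M : Type*} [Zero M] {φ : ℝ → M}
    (hφ : HasCompactSupport φ) (c : ℝ) : HasFiniteSupport fun j : ℤ => φ (j + c) := by
  have hK : IsCompact ((· + c) ⁻¹' tsupport φ) :=
    (Homeomorph.addRight c).isCompact_preimage.mpr hφ
  have := Int.tendsto_coe_cofinite hK.compl_mem_cocompact
  rw [Filter.mem_map, Filter.mem_cofinite] at this
  exact this.subset fun j hj => by simpa using subset_tsupport φ hj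

theorem Function.HasFiniteSupport.sumElim {α β M : Type*} [Zero M] {f : α → M} {g : β → M}
    (hf : HasFiniteSupport f) (hg : HasFiniteSupport g) : HasFiniteSupport (Sum.elim f g) := by
  refine ((hf.image Sum.inl).union (hg.image Sum.inr)).subset ?_
  rintro (x | x) hx
  exacts [Or.inl ⟨x, hx, rfl⟩, Or.inr ⟨x, hx, rfl⟩]

theorem Function.HasFiniteSupport.comp_mul_add {M : Type*} [Zero M] {a : ℤ → M}
    (ha : HasFiniteSupport a) {m : ℤ} (hm : m ≠ 0) (r : ℤ) :
    HasFiniteSupport fun j => a (m * j + r) :=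
  ha.comp_of_injective fun j k h => by simpa [hm] using h

theorem finsum_range_mul_add {M : Type*} [AddCommMonoid M] {m : ℕ} [NeZero m] {g : ℤ → M}
    (hg : HasFiniteSupport g) :
    ∑ γ ∈ range m, ∑ᶠ k : ℤ, g (m * k + γ) = ∑ᶠ j : ℤ, g j := by
  let e := (Int.divModEquiv m).symm
  rw [← finsum_comp_equiv e, finsum_curry (fun p => g (e p)) (hg.comp_of_injective e.injective),
    ← Fin.sum_univ_eq_sum_range (fun γ => ∑ᶠ k : ℤ, g (m * k + γ)),
    sum_finsum_comm _ (fun (γ : Fin m) (k : ℤ) => g (m * k + γ))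
      fun γ _ => hg.fun_comp_of_injective fun k l h => ?_]
  · refine finsum_congr fun k => ?_
    rw [finsum_eq_sum_of_fintype]
    simp [e, mul_comm]
  · simpa [NeZero.ne m] using h

theorem finsum_comm_of_hasFiniteSupport {α β M : Type*} [AddCommMonoid M] {f : α → β → M}
    (hf : HasFiniteSupport (uncurry f)) :
    ∑ᶠ a, ∑ᶠ b, f a b = ∑ᶠ b, ∑ᶠ a, f a b :=
  calc ∑ᶠ a, ∑ᶠ b, f a b = ∑ᶠ p, uncurry f p := (finsum_curry _ hf).symm
    _ = ∑ᶠ q, uncurry f (Equiv.prodComm β α q) := (finsum_comp_equiv _).symm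
    _ = ∑ᶠ b, ∑ᶠ a, f a b :=
      finsum_curry _ (hf.comp_of_injective (Equiv.prodComm β α).injective)

theorem finsum_sumElim {α β M : Type*} [AddCommMonoid M] {f : α → M} {g : β → M}
    (hf : HasFiniteSupport f) (hg : HasFiniteSupport g) :
    ∑ᶠ x, Sum.elim f g x = ∑ᶠ a, f a + ∑ᶠ b, g b := by
  rw [finsum_eq_sum f hf, finsum_eq_sum g hg,
    finsum_eq_sum_of_support_subset _ (s := hf.toFinset.disjSum hg.toFinset), sum_sumElim]
  rintro (x | x) hx
  · exact Finset.inl_mem_disjSum.2 (hf.mem_toFinset.2 hx)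
  · exact Finset.inr_mem_disjSum.2 (hg.mem_toFinset.2 hx)

open Polynomial in
theorem eq_zero_of_finsum_mul_zpow_eq_zero {ι K : Type*} [Field K] {c : ι → K}
    (hc : HasFiniteSupport c) {e : ι → ℤ} (he : Injective e) {s : Set K} (hs : s.Infinite)
    (h : ∀ z ∈ s, ∑ᶠ i, c i * z ^ e i = 0) : c = 0 := by
  classical
  set S := hc.toFinset
  obtain ⟨N, hN⟩ : ∃ N : ℕ, ∀ i ∈ S, 0 ≤ e i + N :=
    ⟨S.sup fun i => (e i).natAbs, fun i hi => by
      have := le_sup (f := fun i => (e i).natAbs) hi; omega⟩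
  let d : ι → ℕ := fun i => (e i + N).toNat
  have hd : ∀ i ∈ S, (d i : ℤ) = e i + N := fun i hi => Int.toNat_of_nonneg (hN i hi)
  let p : K[X] := ∑ i ∈ S, monomial (d i) (c i)
  have hp : p = 0 := by
    refine eq_zero_of_infinite_isRoot p ((hs.sdiff (Set.finite_singleton 0)).mono ?_)
    rintro z ⟨hz, hz0 : z ≠ 0⟩
    have : p.eval z = z ^ (N : ℤ) * ∑ᶠ i, c i * z ^ e i := by
      rw [finsum_eq_sum_of_support_subset _
        fun i hi => hc.mem_toFinset.2 (left_ne_zero_of_mul hi), mul_sum, eval_finsetSum]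
      refine sum_congr rfl fun i hi => ?_
      rw [eval_monomial, ← zpow_natCast, hd i hi, zpow_add₀ hz0]
      ring
    simp [IsRoot, this, h z hz]
  ext i
  by_cases hi : i ∈ S
  · have hd_inj : ∀ j ∈ S, d j = d i → j = i := fun j hj hji => he (by
      have := hd i hi
      have := hd j hj
      omega)
    have := congrArg (coeff · (d i)) hp
    simp only [p, finsetSum_coeff, coeff_monomial] at this
    rwa [sum_eq_single_of_mem i hi fun j hj hji => if_neg (hji ∘ hd_inj j hj), if_pos rfl] at this
  · simpa [S, hc.mem_toFinset] using hi

theorem eq_single_of_finsum_zpow_add_eq_one {K : Type*} [Field K] {m : ℕ} [NeZero m]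
    {f g : ℤ → K} (hf : HasFiniteSupport f) (hg : HasFiniteSupport g) {s : Set K}
    (hs : s.Infinite)
    (h : ∀ z ∈ s,
      ∑ᶠ j : ℤ, f j * z ^ (2 * (m : ℤ) * j) + ∑ᶠ j : ℤ, g j * z ^ (2 * (m : ℤ) * j + m) = 1) :
    f = Pi.single 0 1 := by
  have hδ : HasFiniteSupport (Pi.single 0 1 : ℤ → K) :=
    (Set.finite_singleton 0).subset Pi.support_single_subset
  have hm : (m : ℤ) ≠ 0 := by exact_mod_cast NeZero.ne m
  have he : Injective (Sum.elim (fun j : ℤ => 2 * (m : ℤ) * j) fun j => 2 * m * j + m) := by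
    refine Injective.sumElim (fun j k hjk => ?_) (fun j k hjk => ?_) fun j k hjk => ?_
    · simpa [NeZero.ne m] using hjk
    · simpa [NeZero.ne m] using hjk
    · have : (m : ℤ) * (2 * j) = m * (2 * k + 1) := by linarith
      have := mul_left_cancel₀ hm this
      omega
  have := eq_zero_of_finsum_mul_zpow_eq_zero ((hf.sub hδ).sumElim hg) he hs fun z hz => ?_
  · ext j
    simpa [sub_eq_zero] using congrFun this (Sum.inl j)
  · have hsplit := finsum_sumElim (((hf.sub hδ).fun_mul_left fun j => z ^ (2 * (m : ℤ) * j)))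
      (hg.fun_mul_left fun j => z ^ (2 * (m : ℤ) * j + m))
    refine (finsum_congr (Sum.rec (fun _ => rfl) fun _ => rfl)).trans (hsplit.trans ?_)
    have hδsum : ∑ᶠ j : ℤ, (Pi.single 0 1 : ℤ → K) j * z ^ (2 * (m : ℤ) * j) = 1 := by
      rw [finsum_eq_single _ 0 fun j hj => by simp [hj]]
      simp
    simp only [Pi.sub_apply, sub_mul]
    rw [finsum_sub_distrib (hf.fun_mul_left _) (hδ.fun_mul_left _), hδsum]
    linear_combination h z hz

theorem infinite_range_exp_neg_pi_mul_I :
    (Set.range fun ω : ℝ => Complex.exp (-(Real.pi * Complex.I * ω))).Infinite :=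
  (isPreconnected_range (by fun_prop)).infinite_of_nontrivial
    ⟨1, ⟨0, by simp⟩, -1, ⟨1, by simp [Complex.exp_neg]⟩, by norm_num⟩

theorem apply_intCast_eq_finsum_of_refinement {m : ℕ} {a : ℤ → ℝ} {φ : ℝ → ℝ}
    (href : ∀ x : ℝ, φ x = ∑ᶠ k : ℤ, a k * φ (m * x - k + 1 / 2)) (j : ℤ) :
    φ j = ∑ᶠ s : ℤ, a (m * j - s) * φ (s + 1 / 2) := by
  rw [href, ← finsum_comp_equiv (Equiv.subLeft ((m : ℤ) * j))]
  refine finsum_congr fun s => ?_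
  push_cast [Equiv.subLeft_apply]
  ring_nf

theorem apply_add_half_eq_of_interpolatory {lam m : ℕ} (hm : m = 2 * lam + 1) {a : ℤ → ℝ}
    {φ : ℝ → ℝ} (href : ∀ x : ℝ, φ x = ∑ᶠ k : ℤ, a k * φ (m * x - k + 1 / 2))
    (hint : ∀ n : ℤ, φ n = if n = 0 then 1 else 0) (j : ℤ) :
    φ (j + 1 / 2) = a (m * j + (lam + 1)) := by
  have harg : ∀ k : ℤ,
      (m : ℝ) * (j + 1 / 2) - k + 1 / 2 = ((m * j + (lam + 1) - k : ℤ) : ℝ) := by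
    intro k
    subst hm
    push_cast
    ring
  rw [href, finsum_eq_single _ (m * j + (lam + 1)) fun k hk => ?_]
  · rw [harg, sub_self, hint, if_pos rfl, mul_one]
  · rw [harg, hint, if_neg (sub_ne_zero.2 hk.symm), mul_zero]

section Symbols

variable {m : ℕ} {a : ℤ → ℝ} {φ : ℝ → ℝ}

theorem sum_PhiSub_odd_pow [NeZero m] (hφ : HasFiniteSupport fun j : ℤ => φ (j + 1 / 2))
    (z : ℂ) :
    ∑ γ ∈ range m, PhiSub φ m 2 (2 * γ + 1) (z ^ m) =
      2⁻¹ * ∑ᶠ j : ℤ, (φ (j + 1 / 2) : ℂ) * z ^ (2 * (m : ℤ) * j + m) := by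
  rw [← finsum_range_mul_add (m := m) ((hφ.fun_comp Complex.ofReal_zero).fun_mul_left _),
    mul_sum]
  refine sum_congr rfl fun γ _ => ?_
  simp only [PhiSub]
  push_cast
  congr 1
  refine finsum_congr fun k => ?_
  rw [← zpow_natCast z m, ← zpow_mul]
  congr 3 <;> ring

theorem ASub_center_sq [NeZero m] {lam : ℕ} (hm : m = 2 * lam + 1) {z : ℂ} (hz : z ≠ 0) :
    (m : ℂ) * z⁻¹ * ASub a m (lam + 1) (z ^ 2) =
      ∑ᶠ k : ℤ, (a (m * k + (lam + 1)) : ℂ) * z ^ (2 * (m : ℤ) * k + m) := by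
  have hm0 : (m : ℂ) ≠ 0 := NeZero.ne _
  rw [ASub, ← mul_assoc, mul_right_comm _ _ (m : ℂ)⁻¹, mul_inv_cancel₀ hm0, one_mul, mul_finsum]
  refine finsum_congr fun k => ?_
  rw [← zpow_natCast z 2, ← zpow_mul, mul_left_comm, ← zpow_neg_one, ← zpow_add₀ hz]
  congr 2
  subst hm
  push_cast
  ring

theorem ASub_mul_PhiSub {z : ℂ} (hz : z ≠ 0) (γ : ℤ) :
    ASub a m (m - γ) (z ^ 2) * PhiSub φ m 2 (2 * γ + 1) z =
      (2 * m : ℂ)⁻¹ * z * ∑ᶠ l : ℤ, (φ ((m * l + γ : ℤ) + 1 / 2) : ℂ) *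
        ∑ᶠ j : ℤ, (a (m * j - (m * l + γ)) : ℂ) * z ^ (2 * (m : ℤ) * j) := by
  rw [ASub, PhiSub, mul_mul_mul_comm, ← mul_inv, mul_assoc _ z, mul_finsum _ z]
  push_cast
  rw [mul_comm (m : ℂ) 2]
  congr 1
  rw [mul_finsum]
  refine finsum_congr fun l => ?_
  rw [finsum_mul, ← mul_assoc, mul_comm z, mul_assoc, mul_finsum,
    ← finsum_comp_equiv (Equiv.subRight (l + 1))]
  refine finsum_congr fun j => ?_
  have hidx : (m : ℤ) * (j - (l + 1)) + (m - γ) = m * j - (m * l + γ) := by ring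
  have harg : (m : ℝ) * l + (2 * γ + 1) / 2 = m * l + γ + 1 / 2 := by ring
  have hpow : (z ^ 2) ^ ((m : ℤ) * j - (m * l + γ)) * z ^ ((m : ℤ) * (2 * l) + (2 * γ + 1))
      = z * z ^ (2 * (m : ℤ) * j) := by
    rw [← zpow_natCast z 2, ← zpow_mul, ← zpow_add₀ hz, mul_comm z, ← zpow_add_one₀ hz]
    congr 1
    push_cast
    ring
  simp only [Equiv.subRight_apply, hidx, harg]
  linear_combination (a (m * j - (m * l + γ)) * φ (m * l + γ + 1 / 2) : ℂ) * hpow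

theorem finsum_mul_finsum_mask_eq [NeZero m] (ha : HasFiniteSupport a)
    (hφ : HasFiniteSupport fun j : ℤ => φ (j + 1 / 2))
    (hrefine : ∀ j : ℤ, φ j = ∑ᶠ s : ℤ, a (m * j - s) * φ (s + 1 / 2)) (f : ℤ → ℂ) :
    ∑ᶠ s : ℤ, (φ (s + 1 / 2) : ℂ) * ∑ᶠ j : ℤ, (a (m * j - s) : ℂ) * f j =
      ∑ᶠ j : ℤ, (φ j : ℂ) * f j := by
  have hsupp : HasFiniteSupport
      (uncurry fun (s j : ℤ) => (φ (s + 1 / 2) : ℂ) * (a (m * j - s) * f j)) := by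
    refine ((hφ.prod ha).preimage (f := fun p : ℤ × ℤ => (p.1, m * p.2 - p.1)) ?_).subset ?_
    · rintro ⟨s, j⟩ - ⟨s', j'⟩ - h
      simp only [Prod.mk.injEq] at h
      obtain ⟨rfl, h⟩ := h
      simpa [NeZero.ne m] using h
    · rintro ⟨s, j⟩ h
      simp only [mem_support, uncurry_apply_pair, mul_ne_zero_iff, Complex.ofReal_ne_zero] at h
      exact ⟨h.1, h.2.1⟩
  simp_rw [mul_finsum]
  rw [finsum_comm_of_hasFiniteSupport hsupp]
  refine finsum_congr fun j => ?_
  have hcast := map_finsum Complex.ofRealHom (hφ.fun_mul_right fun s => a (m * j - s))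
  simp only [Complex.ofRealHom_eq_coe] at hcast
  rw [hrefine j, hcast, finsum_mul]
  refine finsum_congr fun s => ?_
  push_cast
  ring

theorem sum_ASub_mul_PhiSub [NeZero m] (ha : HasFiniteSupport a)
    (hφ : HasFiniteSupport fun j : ℤ => φ (j + 1 / 2))
    (hrefine : ∀ j : ℤ, φ j = ∑ᶠ s : ℤ, a (m * j - s) * φ (s + 1 / 2)) {z : ℂ} (hz : z ≠ 0) :
    (m : ℂ) * z⁻¹ * ∑ γ ∈ range m, ASub a m (m - γ) (z ^ 2) * PhiSub φ m 2 (2 * γ + 1) z =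
      2⁻¹ * ∑ᶠ j : ℤ, (φ j : ℂ) * z ^ (2 * (m : ℤ) * j) := by
  simp_rw [ASub_mul_PhiSub hz, ← mul_sum]
  rw [finsum_range_mul_add (g := fun s : ℤ => (φ (s + 1 / 2) : ℂ) *
      ∑ᶠ j : ℤ, (a (m * j - s) : ℂ) * z ^ (2 * (m : ℤ) * j))
      ((hφ.fun_comp Complex.ofReal_zero).fun_mul_left _),
    finsum_mul_finsum_mask_eq ha hφ hrefine]
  have : (m : ℂ) ≠ 0 := NeZero.ne _
  field_simp

theorem dual_identity_iff {lam : ℕ} (hm : m = 2 * lam + 1) (ha : HasFiniteSupport a)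
    (hφ : HasFiniteSupport fun j : ℤ => φ (j + 1 / 2))
    (hrefine : ∀ j : ℤ, φ j = ∑ᶠ s : ℤ, a (m * j - s) * φ (s + 1 / 2)) {z : ℂ} (hz : z ≠ 0) :
    (1 / 2 + ∑ γ ∈ range m, PhiSub φ m 2 (2 * γ + 1) (z ^ m) =
        (m : ℂ) * z⁻¹ * (ASub a m (lam + 1) (z ^ 2) / 2 +
          ∑ γ ∈ range m, ASub a m (m - γ) (z ^ 2) * PhiSub φ m 2 (2 * γ + 1) z)) ↔
      ∑ᶠ j : ℤ, (φ j : ℂ) * z ^ (2 * (m : ℤ) * j) +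
        ∑ᶠ j : ℤ, ((a (m * j + (lam + 1)) : ℂ) - φ (j + 1 / 2)) * z ^ (2 * (m : ℤ) * j + m) =
          1 := by
  have : NeZero m := ⟨by omega⟩
  have ha' : HasFiniteSupport fun j : ℤ => (a (m * j + (lam + 1)) : ℂ) :=
    (ha.comp_mul_add (by omega) _).fun_comp Complex.ofReal_zero
  simp only [sub_mul]
  rw [sum_PhiSub_odd_pow hφ, mul_add, ← mul_div_assoc, ASub_center_sq hm hz,
    sum_ASub_mul_PhiSub ha hφ hrefine hz,
    finsum_sub_distrib (ha'.fun_mul_left _) ((hφ.fun_comp Complex.ofReal_zero).fun_mul_left _)]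
  constructor <;> intro h
  · linear_combination -2 * h
  · linear_combination -h / 2

end Symbols

theorem dual_interpolatory_characterization_odd_general
    (lam : ℕ) (m : ℕ) (hm : m = 2 * lam + 1)
    (a : ℤ → ℝ) (ha : (Function.support a).Finite)
    (φ : ℝ → ℝ) (hφs : HasCompactSupport φ)
    (href : ∀ x : ℝ, φ x = ∑ᶠ k : ℤ, a k * φ ((m : ℝ) * x - (k : ℝ) + 1 / 2)) :
    (∀ n : ℤ, φ (n : ℝ) = if n = 0 then 1 else 0) ↔
      (∀ ω : ℝ, ∀ z : ℂ, z = Complex.exp (-((Real.pi : ℂ) * Complex.I * (ω : ℂ))) →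
        1 / 2 + ∑ γ ∈ Finset.range m, PhiSub φ m 2 (2 * (γ : ℤ) + 1) (z ^ m) =
          (m : ℂ) * z⁻¹ *
            (ASub a m ((lam : ℤ) + 1) (z ^ 2) / 2 +
              ∑ γ ∈ Finset.range m,
                ASub a m ((m : ℤ) - (γ : ℤ)) (z ^ 2) * PhiSub φ m 2 (2 * (γ : ℤ) + 1) z)) := by
  have : NeZero m := ⟨by omega⟩
  have hφhalf := hφs.hasFiniteSupport_intCast_add (1 / 2)
  have hrefine := apply_intCast_eq_finsum_of_refinement href
  constructor
  · rintro hint ω z rfl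
    rw [dual_identity_iff hm ha hφhalf hrefine (Complex.exp_ne_zero _)]
    simp_rw [apply_add_half_eq_of_interpolatory hm href hint, sub_self, zero_mul, finsum_zero,
      add_zero]
    rw [finsum_eq_single _ 0 fun j hj => by simp [hint, hj]]
    simpa using hint 0
  · intro hid n
    have hφint : HasFiniteSupport fun j : ℤ => (φ j : ℂ) := by
      simpa using (hφs.hasFiniteSupport_intCast_add 0).fun_comp Complex.ofReal_zero
    have hcoeff := eq_single_of_finsum_zpow_add_eq_one hφint
      (((HasFiniteSupport.comp_mul_add ha (by omega) _).fun_comp Complex.ofReal_zero).fun_sub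
        (hφhalf.fun_comp Complex.ofReal_zero))
      infinite_range_exp_neg_pi_mul_I fun _ ⟨ω, hω⟩ =>
        (dual_identity_iff hm ha hφhalf hrefine (hω ▸ Complex.exp_ne_zero _)).1 (hid ω _ hω.symm)
    have := congrFun hcoeff n
    rw [Pi.single_apply] at this
    split_ifs at this ⊢ <;> exact_mod_cast this

/-- Theorem 3.1, odd arity `m = 2λ+1`: `φ` is interpolatory iff
`1/2 + Σ_γ Φ_{2,2γ+1}(z^m) = m z⁻¹ (A_{(m+1)/2}(z²)/2 + Σ_γ A_{m-γ}(z²) Φ_{2,2γ+1}(z))`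
for all `ω ∈ ℝ`, `z = e^{-πiω}`.  Here `(m+1)/2 = λ+1`. -/
theorem dual_interpolatory_characterization_odd
    (lam : ℕ) (hlam : 1 ≤ lam) (m : ℕ) (hm : m = 2 * lam + 1)
    (a : ℤ → ℝ) (ha : (Function.support a).Finite)
    (φ : ℝ → ℝ) (hφc : Continuous φ) (hφs : HasCompactSupport φ)
    (href : ∀ x : ℝ, φ x = ∑ᶠ k : ℤ, a k * φ ((m : ℝ) * x - (k : ℝ) + 1 / 2))
    (hdecay : ∃ C ε : ℝ, 0 < C ∧ 0 < ε ∧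
      ∀ x : ℝ, |φ x| + ‖fourierT φ x‖ ≤ C * (1 + |x|) ^ (-1 - ε)) :
    (∀ n : ℤ, φ (n : ℝ) = if n = 0 then 1 else 0) ↔
      (∀ ω : ℝ, ∀ z : ℂ, z = Complex.exp (-((Real.pi : ℂ) * Complex.I * (ω : ℂ))) →
        1 / 2 + ∑ γ ∈ Finset.range m, PhiSub φ m 2 (2 * (γ : ℤ) + 1) (z ^ m) =
          (m : ℂ) * z⁻¹ *
            (ASub a m ((lam : ℤ) + 1) (z ^ 2) / 2 +
              ∑ γ ∈ Finset.range m,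
                ASub a m ((m : ℤ) - (γ : ℤ)) (z ^ 2) * PhiSub φ m 2 (2 * (γ : ℤ) + 1) z)) :=
  dual_interpolatory_characterization_odd_general lam m hm a ha φ hφs href
end

section
/- There exists a continuous function φ : ℝ → ℝ with the following properties: (i) φ(x) = 0 for every x with |x| ≥ 3/4; (ii) φ(x) = 1 for every x with |x| ≤ 1/4; (iii) φ is nondecreasing on [−3/4, −1/4] and nonincreasing on [1/4, 3/4]; (iv) φ(n) = δ_{0,n} for all n ∈ ℤ; (v) φ is Hölder continuous with exponent log 2 / log 3; and (vi) φ satisfies the ternary dual refinement equation φ(x) = (1/2) φ(3x + 3/2) + φ(3x + 1/2) + φ(3x − 1/2) + (1/2) φ(3x − 3/2) for all x ∈ ℝ. -/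
/-!
The Cantor staircase `C` is the fixed point of `g ↦ (g (3 x) + g (3 x - 2)) / 2` on the closed set
of monotone bounded continuous functions that vanish on `(-∞, 0]` and equal `1` on `[1, ∞)`. On
that set the map is a `1/2`-contraction, because at every `x` one of the two terms is frozen at
`0` or `1`. The same observation gives `|C x - C y| ≤ 2⁻ⁿ` whenever `|x - y| ≤ 3⁻ⁿ`, hence Hölder
continuity of exponent `log 2 / log 3`.

The limit function is `φ x = C (2 x + 3/2) - C (2 x - 1/2)`: its refinement equation is the
difference of the self-similarity identities `C (3 u) + C (3 u - 2) = 2 C u` at `u = 2 x + 3/2`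
and `u = 2 x - 1/2`, and its other properties are read off from `C = 0` on `(-∞, 0]`,
`C = 1` on `[1, ∞)`.
-/

open Set Filter Topology
open scoped NNReal

noncomputable section

section Holder

variable {X Y : Type*} [PseudoMetricSpace X]

theorem HolderWith.of_dist_le [PseudoMetricSpace Y] {C r : ℝ≥0} {f : X → Y}
    (h : ∀ x y, dist (f x) (f y) ≤ C * dist x y ^ (r : ℝ)) : HolderWith C r f := by
  intro x y
  rw [edist_dist, edist_dist, ENNReal.ofReal_rpow_of_nonneg dist_nonneg r.coe_nonneg,
    ← ENNReal.ofReal_coe_nnreal, ← ENNReal.ofReal_mul C.coe_nonneg]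
  exact ENNReal.ofReal_le_ofReal (h x y)

theorem HolderWith.sub [SeminormedAddCommGroup Y] {C C' r : ℝ≥0} {f g : X → Y}
    (hf : HolderWith C r f) (hg : HolderWith C' r g) : HolderWith (C + C') r (f - g) := by
  have hneg : HolderWith C' r (-g) := fun x y => by
    simpa only [Pi.neg_apply, edist_neg_neg] using hg x y
  simpa only [sub_eq_add_neg] using hf.add hneg

theorem HolderWith.of_dist_le_inv_pow [PseudoMetricSpace Y] {f : X → Y} {b c : ℝ} {α : ℝ≥0}
    (hb : 1 < b) (hc : 1 < c) (hα : b ^ (α : ℝ) = c) (hbdd : ∀ x y, dist (f x) (f y) ≤ 1)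
    (hscale : ∀ (n : ℕ) x y, dist x y ≤ b⁻¹ ^ n → dist (f x) (f y) ≤ c⁻¹ ^ n) :
    HolderWith (Real.toNNReal c) α f := by
  refine HolderWith.of_dist_le fun x y => ?_
  rw [Real.coe_toNNReal c (by linarith)]
  rcases (dist_nonneg : 0 ≤ dist x y).eq_or_lt with hd | hd
  · have hlim : Tendsto (fun n : ℕ => c⁻¹ ^ n) atTop (𝓝 0) :=
      tendsto_pow_atTop_nhds_zero_of_lt_one (by positivity) (inv_lt_one_of_one_lt₀ hc)
    calc dist (f x) (f y) ≤ 0 :=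
          ge_of_tendsto' hlim fun n => hscale n x y (by rw [← hd]; positivity)
      _ ≤ c * dist x y ^ (α : ℝ) := by positivity
  rcases le_or_gt 1 (dist x y) with h1 | h1
  · calc dist (f x) (f y) ≤ 1 := hbdd x y
      _ ≤ dist x y ^ (α : ℝ) := Real.one_le_rpow h1 α.coe_nonneg
      _ ≤ c * dist x y ^ (α : ℝ) := le_mul_of_one_le_left (by positivity) hc.le
  obtain ⟨n, hlow, hup⟩ :=
    exists_nat_pow_near_of_lt_one hd h1.le (by positivity) (inv_lt_one_of_one_lt₀ hb)
  have hpow : (b⁻¹ ^ (n + 1)) ^ (α : ℝ) = c⁻¹ ^ (n + 1) := by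
    rw [← Real.rpow_natCast, ← Real.rpow_mul (by positivity), mul_comm,
      Real.rpow_mul (by positivity), Real.inv_rpow (by positivity), hα, Real.rpow_natCast]
  calc dist (f x) (f y) ≤ c⁻¹ ^ n := hscale n x y hup
    _ = c * c⁻¹ ^ (n + 1) := by rw [pow_succ, mul_left_comm, mul_inv_cancel₀ (by positivity),
          mul_one]
    _ = c * (b⁻¹ ^ (n + 1)) ^ (α : ℝ) := by rw [hpow]
    _ ≤ c * dist x y ^ (α : ℝ) := by gcongr

end Holder

section Staircase

open BoundedContinuousFunction

def staircaseStep (g : ℝ →ᵇ ℝ) : ℝ →ᵇ ℝ :=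
  (2⁻¹ : ℝ) • (g.compContinuous ⟨fun x => 3 * x, by fun_prop⟩ +
    g.compContinuous ⟨fun x => 3 * x - 2, by fun_prop⟩)

theorem staircaseStep_apply (g : ℝ →ᵇ ℝ) (x : ℝ) :
    staircaseStep g x = (g (3 * x) + g (3 * x - 2)) / 2 := by
  simp only [staircaseStep, smul_add, coe_add, coe_smul, compContinuous_apply,
    ContinuousMap.coe_mk, smul_eq_mul, Pi.add_apply]
  ring

def staircaseProfiles : Set (ℝ →ᵇ ℝ) :=
  {g | Monotone g ∧ (∀ x ≤ 0, g x = 0) ∧ ∀ x, 1 ≤ x → g x = 1}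

theorem isClosed_staircaseProfiles : IsClosed staircaseProfiles := by
  have hev (x : ℝ) : Continuous fun g : ℝ →ᵇ ℝ => g x := continuous_eval_const x
  simp only [staircaseProfiles, Monotone, ofPred_and, ofPred_forall]
  refine .inter ?_ (.inter ?_ ?_) <;> refine isClosed_iInter fun x => ?_
  · exact isClosed_iInter fun y => isClosed_iInter fun _ => isClosed_le (hev x) (hev y)
  all_goals exact isClosed_iInter fun _ => isClosed_eq (hev x) continuous_const

instance : CompleteSpace staircaseProfiles :=
  completeSpace_coe_iff_isComplete.2 isClosed_staircaseProfiles.isComplete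

instance : Nonempty staircaseProfiles := by
  have hclamp (x : ℝ) : max 0 (min 1 x) ∈ Icc (0 : ℝ) 1 :=
    ⟨le_max_left _ _, max_le zero_le_one (min_le_left _ _)⟩
  let clamp : ℝ →ᵇ ℝ := .mkOfBound ⟨fun x => max 0 (min 1 x), by fun_prop⟩ 1 fun x y =>
    Real.dist_le_of_mem_Icc_01 (hclamp x) (hclamp y)
  refine ⟨⟨clamp, fun x y hxy => ?_, fun x hx => ?_, fun x hx => ?_⟩⟩
  · exact max_le_max le_rfl (min_le_min le_rfl hxy)
  · simp [clamp, hx]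
  · simp [clamp, hx]

variable {g h : ℝ →ᵇ ℝ} {x : ℝ}

theorem staircaseStep_apply_of_le_two_thirds (hg : g ∈ staircaseProfiles) (hx : x ≤ 2 / 3) :
    staircaseStep g x = g (3 * x) / 2 := by
  rw [staircaseStep_apply, hg.2.1 (3 * x - 2) (by linarith), add_zero]

theorem staircaseStep_apply_of_one_third_le (hg : g ∈ staircaseProfiles) (hx : 1 / 3 ≤ x) :
    staircaseStep g x = (1 + g (3 * x - 2)) / 2 := by
  rw [staircaseStep_apply, hg.2.2 (3 * x) (by linarith)]

theorem mapsTo_staircaseStep : MapsTo staircaseStep staircaseProfiles staircaseProfiles := by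
  intro g hg
  refine ⟨fun x y hxy => ?_, fun x hx => ?_, fun x hx => ?_⟩
  · simp only [staircaseStep_apply]
    gcongr <;> apply hg.1 <;> linarith
  · rw [staircaseStep_apply_of_le_two_thirds hg (by linarith), hg.2.1 _ (by linarith), zero_div]
  · rw [staircaseStep_apply_of_one_third_le hg (by linarith), hg.2.2 _ (by linarith)]
    norm_num

theorem dist_staircaseStep_le (hg : g ∈ staircaseProfiles) (hh : h ∈ staircaseProfiles) :
    dist (staircaseStep g) (staircaseStep h) ≤ 2⁻¹ * dist g h := by
  refine (dist_le (by positivity)).2 fun x => ?_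
  rcases le_total x (1 / 3) with hx | hx
  · rw [staircaseStep_apply_of_le_two_thirds hg (by linarith),
      staircaseStep_apply_of_le_two_thirds hh (by linarith), Real.dist_eq, ← sub_div, abs_div,
      abs_two, div_eq_inv_mul, ← Real.dist_eq]
    gcongr
    exact dist_coe_le_dist _
  · rw [staircaseStep_apply_of_one_third_le hg hx, staircaseStep_apply_of_one_third_le hh hx,
      Real.dist_eq, ← sub_div, add_sub_add_left_eq_sub, abs_div, abs_two, div_eq_inv_mul,
      ← Real.dist_eq]
    gcongr
    exact dist_coe_le_dist _

theorem contractingWith_staircaseStep :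
    ContractingWith 2⁻¹ (mapsTo_staircaseStep.restrict staircaseStep _ _) :=
  ⟨by norm_num, .of_dist_le_mul fun g h => dist_staircaseStep_le g.2 h.2⟩

def cantorStaircase : ℝ →ᵇ ℝ :=
  (ContractingWith.fixedPoint _ contractingWith_staircaseStep : staircaseProfiles)

theorem cantorStaircase_mem : cantorStaircase ∈ staircaseProfiles :=
  Subtype.prop _

theorem monotone_cantorStaircase : Monotone cantorStaircase :=
  cantorStaircase_mem.1

theorem cantorStaircase_of_nonpos (hx : x ≤ 0) : cantorStaircase x = 0 :=
  cantorStaircase_mem.2.1 x hx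

theorem cantorStaircase_of_one_le (hx : 1 ≤ x) : cantorStaircase x = 1 :=
  cantorStaircase_mem.2.2 x hx

theorem staircaseStep_cantorStaircase : staircaseStep cantorStaircase = cantorStaircase :=
  congrArg Subtype.val (ContractingWith.fixedPoint_isFixedPt contractingWith_staircaseStep)

theorem cantorStaircase_two_scale (x : ℝ) :
    cantorStaircase (3 * x) + cantorStaircase (3 * x - 2) = 2 * cantorStaircase x := by
  conv_rhs => rw [← staircaseStep_cantorStaircase, staircaseStep_apply]
  ring

theorem cantorStaircase_of_le_two_thirds (hx : x ≤ 2 / 3) :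
    cantorStaircase x = cantorStaircase (3 * x) / 2 := by
  conv_lhs => rw [← staircaseStep_cantorStaircase]
  exact staircaseStep_apply_of_le_two_thirds cantorStaircase_mem hx

theorem cantorStaircase_of_one_third_le (hx : 1 / 3 ≤ x) :
    cantorStaircase x = (1 + cantorStaircase (3 * x - 2)) / 2 := by
  conv_lhs => rw [← staircaseStep_cantorStaircase]
  exact staircaseStep_apply_of_one_third_le cantorStaircase_mem hx

theorem cantorStaircase_mem_Icc (x : ℝ) : cantorStaircase x ∈ Icc 0 1 := by
  constructor
  · calc 0 = cantorStaircase (min x 0) := (cantorStaircase_of_nonpos (min_le_right x 0)).symm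
      _ ≤ cantorStaircase x := monotone_cantorStaircase (min_le_left x 0)
  · calc cantorStaircase x ≤ cantorStaircase (max x 1) :=
          monotone_cantorStaircase (le_max_left x 1)
      _ = 1 := cantorStaircase_of_one_le (le_max_right x 1)

theorem dist_cantorStaircase_le_inv_pow (n : ℕ) {x y : ℝ} (hxy : dist x y ≤ 3⁻¹ ^ n) :
    dist (cantorStaircase x) (cantorStaircase y) ≤ 2⁻¹ ^ n := by
  induction n generalizing x y with
  | zero =>
    rw [pow_zero]
    exact Real.dist_le_of_mem_Icc_01 (cantorStaircase_mem_Icc x) (cantorStaircase_mem_Icc y)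
  | succ n ih =>
    have hscaled (u v : ℝ) (huv : u - v = 3 * (x - y)) : dist u v ≤ 3⁻¹ ^ n := by
      rw [Real.dist_eq, huv, abs_mul, abs_of_pos three_pos, ← Real.dist_eq]
      calc 3 * dist x y ≤ 3 * 3⁻¹ ^ (n + 1) := by gcongr
        _ = 3⁻¹ ^ n := by rw [pow_succ]; ring
    have hclose : |x - y| ≤ 1 / 3 := by
      refine (Real.dist_eq x y ▸ hxy).trans ?_
      rw [pow_succ, one_div]
      exact mul_le_of_le_one_left (by positivity) (pow_le_one₀ (by positivity) (by norm_num))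
    rw [abs_le] at hclose
    rw [Real.dist_eq]
    rcases le_total (max x y) (2 / 3) with hmax | hmax
    · rw [cantorStaircase_of_le_two_thirds (le_of_max_le_left hmax),
        cantorStaircase_of_le_two_thirds (le_of_max_le_right hmax), ← sub_div, abs_div, abs_two,
        ← Real.dist_eq, pow_succ, div_eq_mul_inv]
      gcongr
      exact ih (hscaled _ _ (by ring))
    · have hmin : 1 / 3 ≤ min x y := by
        rcases le_max_iff.1 hmax with h | h <;> exact le_min (by linarith) (by linarith)
      rw [cantorStaircase_of_one_third_le (le_min_iff.1 hmin).1,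
        cantorStaircase_of_one_third_le (le_min_iff.1 hmin).2, ← sub_div,
        add_sub_add_left_eq_sub, abs_div, abs_two, ← Real.dist_eq, pow_succ, div_eq_mul_inv]
      gcongr
      exact ih (hscaled _ _ (by ring))

theorem holderWith_cantorStaircase :
    HolderWith 2 (Real.toNNReal (Real.log 2 / Real.log 3)) cantorStaircase := by
  have hα : (3 : ℝ) ^ ((Real.toNNReal (Real.log 2 / Real.log 3) : ℝ)) = 2 := by
    rw [Real.coe_toNNReal _ (by positivity), Real.log_div_log, Real.rpow_logb] <;> norm_num
  simpa using HolderWith.of_dist_le_inv_pow (by norm_num) (by norm_num) hα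
    (fun x y => Real.dist_le_of_mem_Icc_01 (cantorStaircase_mem_Icc x) (cantorStaircase_mem_Icc y))
    (fun n x y => dist_cantorStaircase_le_inv_pow n)

end Staircase

def cantorDualLimit (x : ℝ) : ℝ :=
  cantorStaircase (2 * x + 3 / 2) - cantorStaircase (2 * x - 1 / 2)

theorem continuous_cantorDualLimit : Continuous cantorDualLimit := by
  unfold cantorDualLimit
  fun_prop

theorem cantorDualLimit_of_three_quarters_le_abs {x : ℝ} (hx : 3 / 4 ≤ |x|) :
    cantorDualLimit x = 0 := by
  rcases le_abs'.1 hx with hx | hx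
  · rw [cantorDualLimit, cantorStaircase_of_nonpos (by linarith),
      cantorStaircase_of_nonpos (by linarith), sub_self]
  · rw [cantorDualLimit, cantorStaircase_of_one_le (by linarith),
      cantorStaircase_of_one_le (by linarith), sub_self]

theorem cantorDualLimit_of_abs_le_one_quarter {x : ℝ} (hx : |x| ≤ 1 / 4) :
    cantorDualLimit x = 1 := by
  rw [abs_le] at hx
  rw [cantorDualLimit, cantorStaircase_of_one_le (by linarith),
    cantorStaircase_of_nonpos (by linarith), sub_zero]

theorem monotoneOn_cantorDualLimit : MonotoneOn cantorDualLimit (Icc (-(3 / 4)) (-(1 / 4))) := by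
  intro a ha b hb hab
  rw [cantorDualLimit, cantorDualLimit, cantorStaircase_of_nonpos (x := 2 * a - 1 / 2)
    (by linarith [ha.2]), cantorStaircase_of_nonpos (x := 2 * b - 1 / 2) (by linarith [hb.2])]
  gcongr
  exact monotone_cantorStaircase (by linarith)

theorem antitoneOn_cantorDualLimit : AntitoneOn cantorDualLimit (Icc (1 / 4) (3 / 4)) := by
  intro a ha b hb hab
  rw [cantorDualLimit, cantorDualLimit, cantorStaircase_of_one_le (x := 2 * a + 3 / 2)
    (by linarith [ha.1]), cantorStaircase_of_one_le (x := 2 * b + 3 / 2) (by linarith [hb.1])]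
  gcongr
  exact monotone_cantorStaircase (by linarith)

theorem cantorDualLimit_intCast (n : ℤ) : cantorDualLimit n = if n = 0 then 1 else 0 := by
  split_ifs with hn
  · simp [hn, cantorDualLimit_of_abs_le_one_quarter]
  · refine cantorDualLimit_of_three_quarters_le_abs ?_
    have : (1 : ℝ) ≤ |(n : ℝ)| := by exact_mod_cast Int.one_le_abs hn
    linarith

theorem holderWith_cantorDualLimit :
    ∃ C, HolderWith C (Real.toNNReal (Real.log 2 / Real.log 3)) cantorDualLimit := by
  have haffine (c : ℝ) : HolderWith 2 1 fun x : ℝ => 2 * x + c :=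
    holderWith_one.2 <| LipschitzWith.of_dist_le_mul fun x y => by
      simp [Real.dist_eq, ← mul_sub, abs_mul]
  have hsplit : cantorDualLimit =
      (cantorStaircase ∘ fun x => 2 * x + 3 / 2) - cantorStaircase ∘ fun x => 2 * x + -(1 / 2) := by
    ext x
    simp [cantorDualLimit, sub_eq_add_neg]
  rw [hsplit]
  exact ⟨_, by simpa only [mul_one] using
    (holderWith_cantorStaircase.comp (haffine _)).sub (holderWith_cantorStaircase.comp (haffine _))⟩

theorem cantorDualLimit_refinement (x : ℝ) :
    cantorDualLimit x = 1 / 2 * cantorDualLimit (3 * x + 3 / 2) + cantorDualLimit (3 * x + 1 / 2) +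
      cantorDualLimit (3 * x - 1 / 2) + 1 / 2 * cantorDualLimit (3 * x - 3 / 2) := by
  have h₁ := cantorStaircase_two_scale (2 * x + 3 / 2)
  have h₂ := cantorStaircase_two_scale (2 * x - 1 / 2)
  simp only [cantorDualLimit]
  ring_nf at h₁ h₂ ⊢
  linarith

/-- existence of the (Cantor-type) basic limit function of the ternary
dual interpolatory scheme with mask `{1/2, 1, 1, 1/2}`: continuous, vanishing for
`|x| ≥ 3/4`, equal to `1` for `|x| ≤ 1/4`, monotone on the two lateral intervals,
interpolatory, Hölder continuous of exponent `log 2 / log 3`, and satisfying the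
ternary dual refinement equation. -/
theorem exists_cantor_dual_interpolatory_limit_function :
    ∃ φ : ℝ → ℝ,
      Continuous φ ∧
      (∀ x : ℝ, 3 / 4 ≤ |x| → φ x = 0) ∧
      (∀ x : ℝ, |x| ≤ 1 / 4 → φ x = 1) ∧
      MonotoneOn φ (Set.Icc (-(3 / 4) : ℝ) (-(1 / 4))) ∧
      AntitoneOn φ (Set.Icc (1 / 4 : ℝ) (3 / 4)) ∧
      (∀ n : ℤ, φ (n : ℝ) = if n = 0 then 1 else 0) ∧
      (∃ C : NNReal, HolderWith C (Real.toNNReal (Real.log 2 / Real.log 3)) φ) ∧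
      (∀ x : ℝ, φ x =
        (1 / 2) * φ (3 * x + 3 / 2) + φ (3 * x + 1 / 2) + φ (3 * x - 1 / 2) +
          (1 / 2) * φ (3 * x - 3 / 2)) :=
  ⟨cantorDualLimit, continuous_cantorDualLimit,
    fun _ => cantorDualLimit_of_three_quarters_le_abs,
    fun _ => cantorDualLimit_of_abs_le_one_quarter, monotoneOn_cantorDualLimit,
    antitoneOn_cantorDualLimit, cantorDualLimit_intCast, holderWith_cantorDualLimit,
    cantorDualLimit_refinement⟩
end
end
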